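/- Strong gauge duality for robust PCA: for M ≠ 0 and γ > 0, both problems min{‖X‖_* + γ‖Y‖₁ : X + Y = M} and min{max{‖Z‖₂, ‖Z‖_∞/γ} : ⟨M,Z⟩ ≥ 1} attain their optimal values, and the product of the two optimal values equals 1. -/

import Mathlib

/-!
The primal value `ρ(W) = min {‖X‖_* + γ‖Y‖₁ : X + Y = W}` is an infimal convolution of two norms:
it is attained because the objective is continuous and coercive, and `W ↦ ρ(W)` is sublinear.
Computing the nuclear norm from a singular value decomposition shows that it is the dual norm of
the spectral norm, so splitting `⟨W, Z⟩ = ⟨X, Z⟩ + ⟨Y, Z⟩` gives the Hölder inequality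
`⟨W, Z⟩ ≤ ρ(W) · max (‖Z‖₂, ‖Z‖_∞ / γ)`: every dual feasible `Z` has value at least `1 / ρ(M)`.
Conversely, Hahn–Banach gives a functional `⟨·, Z₀⟩ ≤ ρ` with `⟨M, Z₀⟩ = ρ(M)`; testing it on
rank-one matrices and on matrix units gives `‖Z₀‖₂ ≤ 1` and `‖Z₀‖_∞ ≤ γ`, so `Z₀ / ρ(M)` is dual
optimal with value `1 / ρ(M)`.
-/

open Matrix

/-- The m×n rectangular "diagonal" matrix with entries `s 0, s 1, …` on the diagonal. -/
def svdDiagMat (m n : ℕ) (s : ℕ → ℝ) : Matrix (Fin m) (Fin n) ℝ :=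
  Matrix.of fun i j => if (i : ℕ) = (j : ℕ) then s (i : ℕ) else 0

/-- `s` lists the singular values of `X` in nonincreasing order (padded by zeros from index
`min m n` on), as witnessed by a singular value decomposition `X = U D Vᵀ` with `U, V`
orthonormal. -/
def IsOrderedSVD {m n : ℕ} (X : Matrix (Fin m) (Fin n) ℝ) (s : ℕ → ℝ) : Prop :=
  Antitone s ∧ (∀ i, 0 ≤ s i) ∧ (∀ i, min m n ≤ i → s i = 0) ∧
  ∃ (U : Matrix (Fin m) (Fin m) ℝ) (V : Matrix (Fin n) (Fin n) ℝ),
    U * Uᵀ = 1 ∧ V * Vᵀ = 1 ∧ X = U * svdDiagMat m n s * Vᵀ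

/-- The trace inner product ⟨X,Y⟩ = trace(XᵀY) on m×n real matrices. -/
def matInner {m n : ℕ} (X Y : Matrix (Fin m) (Fin n) ℝ) : ℝ :=
  Matrix.trace (Xᵀ * Y)

/-- The nuclear norm: the sum of the singular values. -/
noncomputable def nuclearNorm {m n : ℕ} (X : Matrix (Fin m) (Fin n) ℝ) : ℝ :=
  sSup {t : ℝ | ∃ s : ℕ → ℝ, IsOrderedSVD X s ∧ t = ∑ i ∈ Finset.range (min m n), s i}

/-- The entrywise ℓ₁ norm ‖Y‖₁ = Σ|Y_{ij}|. -/
def l1Norm {m n : ℕ} (Y : Matrix (Fin m) (Fin n) ℝ) : ℝ :=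
  ∑ i, ∑ j, |Y i j|

/-- The max norm ‖Z‖_∞ = max_{ij}|Z_{ij}|. -/
noncomputable def maxNorm {m n : ℕ} (Z : Matrix (Fin m) (Fin n) ℝ) : ℝ :=
  ⨆ i, ⨆ j, |Z i j|

/-- The spectral norm ‖Z‖₂ = σ_max(Z), as the ℓ₂ operator norm. -/
noncomputable def matSpectralNorm {m n : ℕ} (Z : Matrix (Fin m) (Fin n) ℝ) : ℝ :=
  ‖LinearMap.toContinuousLinearMap (Matrix.toEuclideanLin Z)‖

open Module
open scoped Matrix.Norms.L2Operator

theorem Fin.sum_ite_val_eq {M : Type*} [AddCommMonoid M] {m : ℕ} (a : ℕ) (f : Fin m → M) :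
    ∑ i : Fin m, (if (i : ℕ) = a then f i else 0) = if h : a < m then f ⟨a, h⟩ else 0 := by
  split_ifs with h
  · rw [Finset.sum_eq_single ⟨a, h⟩] <;> grind
  · exact Finset.sum_eq_zero fun i _ => if_neg (by omega)

theorem Fin.sum_ite_val_lt {M : Type*} [AddCommMonoid M] {m : ℕ} (n : ℕ) (s : ℕ → M) :
    ∑ i : Fin m, (if (i : ℕ) < n then s i else 0) = ∑ k ∈ Finset.range (min m n), s k := by
  rw [Fin.sum_univ_eq_sum_range (fun k => if k < n then s k else 0), ← Finset.sum_filter]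
  congr 1
  ext k
  simp

theorem matSpectralNorm_eq_norm {m n : ℕ} (Z : Matrix (Fin m) (Fin n) ℝ) :
    matSpectralNorm Z = ‖Z‖ :=
  rfl

namespace Matrix

variable {ι κ : Type*} [Fintype ι] [Fintype κ] [DecidableEq κ]

theorem l2_opNorm_le_of_mulVec {A : Matrix ι κ ℝ} {c : ℝ} (hc : 0 ≤ c)
    (h : ∀ x : EuclideanSpace ℝ κ, ‖(EuclideanSpace.equiv ι ℝ).symm (A *ᵥ x)‖ ≤ c * ‖x‖) :
    ‖A‖ ≤ c :=
  ContinuousLinearMap.opNorm_le_bound _ hc h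

theorem abs_apply_le_l2_opNorm (A : Matrix ι κ ℝ) (i : ι) (j : κ) : |A i j| ≤ ‖A‖ := by
  have h := A.l2_opNorm_mulVec (EuclideanSpace.single j 1)
  rw [PiLp.norm_single, norm_one, mul_one] at h
  refine le_trans ?_ h
  simpa using PiLp.norm_apply_le
    ((EuclideanSpace.equiv ι ℝ).symm (A *ᵥ ⇑(EuclideanSpace.single j (1 : ℝ)))) i

theorem l2_opNorm_single_le [DecidableEq ι] (i : ι) (j : κ) (c : ℝ) : ‖single i j c‖ ≤ |c| := by
  refine l2_opNorm_le_of_mulVec (abs_nonneg c) fun x => ?_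
  have hx : (EuclideanSpace.equiv ι ℝ).symm (single i j c *ᵥ x) =
      EuclideanSpace.single i (c * x j) := by
    ext k
    simp [single_mulVec, Function.update_apply]
  rw [hx, PiLp.norm_single, norm_mul, Real.norm_eq_abs]
  gcongr
  exact PiLp.norm_apply_le x j

theorem l2_opNorm_le_one_of_transpose_mul_self_eq_diagonal {A : Matrix ι κ ℝ} {d : κ → ℝ}
    (hA : Aᵀ * A = diagonal d) (hd : ∀ k, |d k| ≤ 1) : ‖A‖ ≤ 1 := by
  have h := l2_opNorm_conjTranspose_mul_self A
  rw [conjTranspose_eq_transpose_of_trivial, hA, l2_opNorm_diagonal] at h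
  have h1 : ‖d‖ ≤ 1 := pi_norm_le_iff_of_nonneg zero_le_one |>.mpr hd
  nlinarith [norm_nonneg A]

theorem l2_opNorm_le_one_of_transpose_mul_self {U : Matrix κ κ ℝ} (hU : Uᵀ * U = 1) : ‖U‖ ≤ 1 :=
  l2_opNorm_le_one_of_transpose_mul_self_eq_diagonal (hU.trans diagonal_one.symm) fun _ => by simp

theorem l2_opNorm_transpose [DecidableEq ι] (A : Matrix ι κ ℝ) : ‖Aᵀ‖ = ‖A‖ := by
  rw [← conjTranspose_eq_transpose_of_trivial, l2_opNorm_conjTranspose]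

theorem l2_opNorm_mul_mul_le_of_le_one {ι' κ' : Type*} [Fintype ι'] [Fintype κ'] [DecidableEq ι]
    [DecidableEq κ'] {U : Matrix ι' ι ℝ} {V : Matrix κ κ' ℝ} (hU : ‖U‖ ≤ 1) (hV : ‖V‖ ≤ 1)
    (A : Matrix ι κ ℝ) : ‖U * A * V‖ ≤ ‖A‖ :=
  calc ‖U * A * V‖ ≤ ‖U‖ * ‖A‖ * ‖V‖ :=
        (l2_opNorm_mul _ _).trans (by gcongr; exact l2_opNorm_mul _ _)
    _ ≤ 1 * ‖A‖ * 1 := by gcongr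
    _ = ‖A‖ := by ring

theorem dotProduct_mulVec_le (A : Matrix ι κ ℝ) (u : EuclideanSpace ℝ ι)
    (x : EuclideanSpace ℝ κ) : u ⬝ᵥ (A *ᵥ x) ≤ ‖u‖ * ‖A‖ * ‖x‖ := by
  calc u ⬝ᵥ (A *ᵥ x) = inner ℝ ((EuclideanSpace.equiv ι ℝ).symm (A *ᵥ x)) u := by
        simp [PiLp.inner_apply, dotProduct, mul_comm]
    _ ≤ ‖(EuclideanSpace.equiv ι ℝ).symm (A *ᵥ x)‖ * ‖u‖ := real_inner_le_norm _ _
    _ ≤ ‖A‖ * ‖x‖ * ‖u‖ := by gcongr; exact A.l2_opNorm_mulVec x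
    _ = ‖u‖ * ‖A‖ * ‖x‖ := by ring

end Matrix

theorem ContinuousLinearMap.opNorm_le_of_apply_le {E : Type*} [SeminormedAddCommGroup E]
    [NormedSpace ℝ E] (f : E →L[ℝ] ℝ) {c : ℝ} (hc : 0 ≤ c) (h : ∀ x, f x ≤ c * ‖x‖) :
    ‖f‖ ≤ c := by
  refine f.opNorm_le_bound hc fun x => abs_le.mpr ⟨?_, h x⟩
  have := h (-x)
  rw [map_neg, norm_neg] at this
  linarith

theorem OrthonormalBasis.toMatrix_mul_transpose {ι : Type*} [Fintype ι] [DecidableEq ι]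
    (b : OrthonormalBasis ι ℝ (EuclideanSpace ℝ ι)) :
    (EuclideanSpace.basisFun ι ℝ).toBasis.toMatrix b *
      ((EuclideanSpace.basisFun ι ℝ).toBasis.toMatrix b)ᵀ = 1 := by
  simpa [conjTranspose_eq_transpose_of_trivial] using
    (EuclideanSpace.basisFun ι ℝ).toMatrix_orthonormalBasis_self_mul_conjTranspose b

namespace LinearMap

variable {E F : Type*} [NormedAddCommGroup E] [InnerProductSpace ℝ E] [FiniteDimensional ℝ E]
  [NormedAddCommGroup F] [InnerProductSpace ℝ F] [FiniteDimensional ℝ F]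
  (T : E →ₗ[ℝ] F) {n : ℕ} (hn : finrank ℝ E = n)

theorem inner_apply_eigenvectorBasis_adjoint_comp_self (i j : Fin n) :
    inner ℝ (T (T.isSymmetric_adjoint_comp_self.eigenvectorBasis hn i))
        (T (T.isSymmetric_adjoint_comp_self.eigenvectorBasis hn j)) =
      if i = j then T.singularValues i ^ 2 else 0 := by
  rw [← adjoint_inner_right, ← comp_apply, IsSymmetric.apply_eigenvectorBasis, inner_smul_right,
    orthonormal_iff_ite.mp (OrthonormalBasis.orthonormal _), T.sq_singularValues_fin hn]
  split_ifs with h <;> simp [h]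

theorem singularValues_eq_zero_of_min_finrank_le {k : ℕ}
    (hk : min (finrank ℝ F) (finrank ℝ E) ≤ k) : T.singularValues k = 0 := by
  refine T.singularValues_eq_zero_iff_le_finrank_range.mpr ?_
  have := T.finrank_range_le
  have := Submodule.finrank_le (LinearMap.range T)
  omega

theorem exists_orthonormalBasis_apply_eigenvectorBasis {m : ℕ} (hm : finrank ℝ F = m) :
    ∃ β : OrthonormalBasis (Fin m) ℝ F, ∀ j : Fin n,
      T (T.isSymmetric_adjoint_comp_self.eigenvectorBasis hn j) =
        if h : (j : ℕ) < m then T.singularValues j • β ⟨j, h⟩ else 0 := by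
  set v := T.isSymmetric_adjoint_comp_self.eigenvectorBasis hn
  set s : ℕ → ℝ := ⇑T.singularValues
  have hv : ∀ i j, inner ℝ (T (v i)) (T (v j)) = if i = j then s i ^ 2 else 0 :=
    T.inner_apply_eigenvectorBasis_adjoint_comp_self hn
  have hlt : ∀ k : ℕ, 0 < s k → k < m ∧ k < n := fun k hk => by
    by_contra h
    exact hk.ne' (T.singularValues_eq_zero_of_min_finrank_le (by omega))
  -- the vectors `T vₖ / σₖ` with `σₖ > 0` are orthonormal; extend them to a basis
  let w : Fin m → F := fun k => if h : (k : ℕ) < n then (s k)⁻¹ • T (v ⟨k, h⟩) else 0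
  have hw : Orthonormal ℝ ({k : Fin m | 0 < s k}.domRestrict w) := by
    rw [orthonormal_iff_ite]
    rintro ⟨a, ha⟩ ⟨b, hb⟩
    simp only [Set.mem_ofPred_eq] at ha hb
    simp only [Set.domRestrict_apply, w, dif_pos (hlt _ ha).2, dif_pos (hlt _ hb).2,
      real_inner_smul_left, real_inner_smul_right, hv, Subtype.mk.injEq, Fin.mk.injEq, Fin.val_inj]
    split_ifs with hab
    · subst hab; field_simp [ha.ne']
    · simp
  obtain ⟨β, hβ⟩ := hw.exists_orthonormalBasis_extension_of_card_eq (by simpa using hm)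
  refine ⟨β, fun j => ?_⟩
  rcases (show 0 < s j ∨ 0 = s j from (T.singularValues_nonneg j).lt_or_eq) with hj | hj
  · have hjm := (hlt j hj).1
    rw [dif_pos hjm, hβ ⟨j, hjm⟩ hj]
    simp [w, smul_smul, mul_inv_cancel₀ hj.ne']
  · have : T (v j) = 0 := by
      rw [← inner_self_eq_zero (𝕜 := ℝ), hv, if_pos rfl, ← hj, sq, mul_zero]
    rw [this]
    split_ifs <;> simp [← hj, s]

end LinearMap

section SingularValueDecomposition

variable {m n : ℕ}

theorem transpose_svdDiagMat_one_mul_self :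
    (svdDiagMat m n 1)ᵀ * svdDiagMat m n 1 =
      diagonal fun j : Fin n => if (j : ℕ) < m then 1 else 0 := by
  ext j k
  simp only [mul_apply, transpose_apply, svdDiagMat, of_apply, Pi.one_apply, mul_ite, mul_one,
    mul_zero, diagonal_apply]
  rw [Fin.sum_ite_val_eq]
  split_ifs <;> grind

theorem l2_opNorm_svdDiagMat_one_le : ‖svdDiagMat m n 1‖ ≤ 1 :=
  l2_opNorm_le_one_of_transpose_mul_self_eq_diagonal transpose_svdDiagMat_one_mul_self
    fun _ => by split_ifs <;> simp

theorem exists_isOrderedSVD (X : Matrix (Fin m) (Fin n) ℝ) : ∃ s, IsOrderedSVD X s := by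
  set T := toEuclideanLin X
  have hn : Module.finrank ℝ (EuclideanSpace ℝ (Fin n)) = n := finrank_euclideanSpace_fin
  obtain ⟨β, hβ⟩ := T.exists_orthonormalBasis_apply_eigenvectorBasis hn finrank_euclideanSpace_fin
  set v := T.isSymmetric_adjoint_comp_self.eigenvectorBasis hn
  set U := (EuclideanSpace.basisFun (Fin m) ℝ).toBasis.toMatrix β
  set V := (EuclideanSpace.basisFun (Fin n) ℝ).toBasis.toMatrix v
  have hXV : X * V = U * svdDiagMat m n T.singularValues := by
    ext i j
    have hj := congrArg (fun y => y i) (hβ j)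
    simp only [T, toLpLin_apply] at hj
    simp only [mul_apply, U, V, svdDiagMat, Basis.toMatrix_apply, of_apply, mul_ite, mul_zero,
      OrthonormalBasis.coe_toBasis_repr_apply, EuclideanSpace.basisFun_repr, Fin.sum_ite_val_eq]
    refine (Eq.trans (by simp [mulVec, dotProduct]) hj).trans ?_
    split_ifs <;> simp [mul_comm, T]
  refine ⟨T.singularValues, T.singularValues_antitone, T.singularValues_nonneg, fun i hi => ?_,
    U, V, β.toMatrix_mul_transpose, v.toMatrix_mul_transpose, ?_⟩
  · exact T.singularValues_eq_zero_of_min_finrank_le (by simpa using hi)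
  · rw [← hXV, Matrix.mul_assoc, v.toMatrix_mul_transpose, Matrix.mul_one]

end SingularValueDecomposition

section NuclearNorm

variable {m n : ℕ}

theorem matInner_eq_sum (X Z : Matrix (Fin m) (Fin n) ℝ) :
    matInner X Z = ∑ i, ∑ j, X i j * Z i j := by
  simp only [matInner, trace, diag, mul_apply, transpose_apply]
  exact Finset.sum_comm

theorem matInner_mul_mul_transpose (U : Matrix (Fin m) (Fin m) ℝ) (V : Matrix (Fin n) (Fin n) ℝ)
    (A Z : Matrix (Fin m) (Fin n) ℝ) : matInner (U * A * Vᵀ) Z = matInner A (Uᵀ * Z * V) := by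
  simp only [matInner, transpose_mul, transpose_transpose, Matrix.mul_assoc]
  rw [trace_mul_comm V]
  simp only [Matrix.mul_assoc]

theorem matInner_svdDiagMat (s : ℕ → ℝ) (W : Matrix (Fin m) (Fin n) ℝ) :
    matInner (svdDiagMat m n s) W =
      ∑ i : Fin m, if h : (i : ℕ) < n then s i * W i ⟨i, h⟩ else 0 := by
  simp only [matInner_eq_sum, svdDiagMat, of_apply, ite_mul, zero_mul,
    eq_comm (a := ((_ : Fin m) : ℕ)), Fin.sum_ite_val_eq]

def traceForm : Matrix (Fin m) (Fin n) ℝ →ₗ[ℝ] Matrix (Fin m) (Fin n) ℝ →ₗ[ℝ] ℝ :=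
  LinearMap.mk₂ ℝ matInner
    (fun _ _ _ => by simp [matInner, Matrix.add_mul, trace_add])
    (fun _ _ _ => by simp [matInner, trace_smul])
    (fun _ _ _ => by simp [matInner, Matrix.mul_add, trace_add])
    (fun _ _ _ => by simp [matInner, trace_smul])

theorem traceForm_apply (X Z : Matrix (Fin m) (Fin n) ℝ) : traceForm X Z = matInner X Z := rfl

theorem matInner_svdDiagMat_le {s : ℕ → ℝ} (hs : ∀ k, 0 ≤ s k) {W : Matrix (Fin m) (Fin n) ℝ}
    {c : ℝ} (hW : ∀ i j, W i j ≤ c) :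
    matInner (svdDiagMat m n s) W ≤ c * ∑ k ∈ Finset.range (min m n), s k := by
  rw [matInner_svdDiagMat, ← Fin.sum_ite_val_lt, Finset.mul_sum]
  gcongr with i
  split_ifs
  · nlinarith [hs i, hW i ⟨i, ‹_›⟩]
  · simp

theorem matInner_svdDiagMat_one (s : ℕ → ℝ) :
    matInner (svdDiagMat m n s) (svdDiagMat m n 1) = ∑ k ∈ Finset.range (min m n), s k := by
  rw [matInner_svdDiagMat, ← Fin.sum_ite_val_lt]
  congr 1
  ext i
  split_ifs <;> simp [svdDiagMat]

theorem IsOrderedSVD.matInner_le_sum_mul {X : Matrix (Fin m) (Fin n) ℝ} {s : ℕ → ℝ}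
    (h : IsOrderedSVD X s) (Z : Matrix (Fin m) (Fin n) ℝ) :
    matInner X Z ≤ (∑ k ∈ Finset.range (min m n), s k) * ‖Z‖ := by
  obtain ⟨-, hs, -, U, V, hU, hV, rfl⟩ := h
  have hUt : ‖Uᵀ‖ ≤ 1 := by
    rw [l2_opNorm_transpose]
    exact l2_opNorm_le_one_of_transpose_mul_self (mul_eq_one_comm.mp hU)
  have hV₁ : ‖V‖ ≤ 1 := l2_opNorm_le_one_of_transpose_mul_self (mul_eq_one_comm.mp hV)
  rw [matInner_mul_mul_transpose, mul_comm]
  exact matInner_svdDiagMat_le hs fun i j => (le_abs_self _).trans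
    ((abs_apply_le_l2_opNorm _ i j).trans (l2_opNorm_mul_mul_le_of_le_one hUt hV₁ Z))

theorem IsOrderedSVD.exists_matInner_eq_sum {X : Matrix (Fin m) (Fin n) ℝ} {s : ℕ → ℝ}
    (h : IsOrderedSVD X s) :
    ∃ Z, ‖Z‖ ≤ 1 ∧ matInner X Z = ∑ k ∈ Finset.range (min m n), s k := by
  obtain ⟨-, -, -, U, V, hU, hV, rfl⟩ := h
  have hU₁ : ‖U‖ ≤ 1 := l2_opNorm_le_one_of_transpose_mul_self (mul_eq_one_comm.mp hU)
  have hVt : ‖Vᵀ‖ ≤ 1 := by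
    rw [l2_opNorm_transpose]
    exact l2_opNorm_le_one_of_transpose_mul_self (mul_eq_one_comm.mp hV)
  refine ⟨U * svdDiagMat m n 1 * Vᵀ,
    (l2_opNorm_mul_mul_le_of_le_one hU₁ hVt _).trans l2_opNorm_svdDiagMat_one_le, ?_⟩
  rw [matInner_mul_mul_transpose, ← Matrix.mul_assoc, ← Matrix.mul_assoc, mul_eq_one_comm.mp hU,
    Matrix.one_mul, Matrix.mul_assoc, mul_eq_one_comm.mp hV, Matrix.mul_one,
    matInner_svdDiagMat_one]

theorem IsOrderedSVD.sum_eq_opNorm_traceForm {X : Matrix (Fin m) (Fin n) ℝ} {s : ℕ → ℝ}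
    (h : IsOrderedSVD X s) :
    ∑ k ∈ Finset.range (min m n), s k = ‖(traceForm X).toContinuousLinearMap‖ := by
  set f := (traceForm X).toContinuousLinearMap
  obtain ⟨Z, hZ, hXZ⟩ := h.exists_matInner_eq_sum
  refine le_antisymm ?_ (f.opNorm_le_of_apply_le (Finset.sum_nonneg fun k _ => h.2.1 k)
    h.matInner_le_sum_mul)
  calc ∑ k ∈ Finset.range (min m n), s k = f Z := hXZ.symm
    _ ≤ ‖f‖ * ‖Z‖ := (le_abs_self _).trans (f.le_opNorm Z)
    _ ≤ ‖f‖ := mul_le_of_le_one_right (f.opNorm_nonneg) hZ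

theorem nuclearNorm_eq_opNorm_traceForm (X : Matrix (Fin m) (Fin n) ℝ) :
    nuclearNorm X = ‖(traceForm X).toContinuousLinearMap‖ := by
  obtain ⟨s, hs⟩ := exists_isOrderedSVD X
  have : {t | ∃ s, IsOrderedSVD X s ∧ t = ∑ i ∈ Finset.range (min m n), s i} =
      {‖(traceForm X).toContinuousLinearMap‖} := by
    ext t
    simp only [Set.mem_ofPred_eq, Set.mem_singleton_iff]
    constructor
    · rintro ⟨s', hs', rfl⟩
      exact hs'.sum_eq_opNorm_traceForm
    · rintro rfl
      exact ⟨s, hs, hs.sum_eq_opNorm_traceForm.symm⟩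
  rw [nuclearNorm, this, csSup_singleton]

theorem nuclearNorm_nonneg (X : Matrix (Fin m) (Fin n) ℝ) : 0 ≤ nuclearNorm X := by
  rw [nuclearNorm_eq_opNorm_traceForm]
  exact ContinuousLinearMap.opNorm_nonneg _

theorem nuclearNorm_add_le (X Y : Matrix (Fin m) (Fin n) ℝ) :
    nuclearNorm (X + Y) ≤ nuclearNorm X + nuclearNorm Y := by
  simp only [nuclearNorm_eq_opNorm_traceForm, map_add]
  exact ContinuousLinearMap.opNorm_add_le _ _

theorem nuclearNorm_smul_le (c : ℝ) (X : Matrix (Fin m) (Fin n) ℝ) :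
    nuclearNorm (c • X) ≤ |c| * nuclearNorm X := by
  simp only [nuclearNorm_eq_opNorm_traceForm, map_smul, ← Real.norm_eq_abs]
  exact ContinuousLinearMap.opNorm_smul_le _ _

theorem nuclearNorm_zero : nuclearNorm (0 : Matrix (Fin m) (Fin n) ℝ) = 0 :=
  le_antisymm (by simpa using nuclearNorm_smul_le 0 (0 : Matrix (Fin m) (Fin n) ℝ))
    (nuclearNorm_nonneg 0)

theorem matInner_le_nuclearNorm_mul (X Z : Matrix (Fin m) (Fin n) ℝ) :
    matInner X Z ≤ nuclearNorm X * ‖Z‖ := by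
  rw [nuclearNorm_eq_opNorm_traceForm]
  exact (le_abs_self _).trans ((traceForm X).toContinuousLinearMap.le_opNorm Z)

theorem convexOn_nuclearNorm : ConvexOn ℝ Set.univ (nuclearNorm : Matrix (Fin m) (Fin n) ℝ → ℝ) :=
  ⟨convex_univ, fun X _ Y _ a b ha hb _ => (nuclearNorm_add_le _ _).trans <| by
    grw [nuclearNorm_smul_le, nuclearNorm_smul_le, abs_of_nonneg ha, abs_of_nonneg hb]
    rfl⟩

theorem continuous_nuclearNorm : Continuous (nuclearNorm : Matrix (Fin m) (Fin n) ℝ → ℝ) :=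
  continuousOn_univ.mp (convexOn_nuclearNorm.continuousOn isOpen_univ)

theorem matInner_vecMulVec (u : Fin m → ℝ) (x : Fin n → ℝ) (Z : Matrix (Fin m) (Fin n) ℝ) :
    matInner (vecMulVec u x) Z = u ⬝ᵥ (Z *ᵥ x) := by
  simp only [matInner_eq_sum, vecMulVec_apply, dotProduct, mulVec, Finset.mul_sum]
  exact Finset.sum_congr rfl fun i _ => Finset.sum_congr rfl fun j _ => by ring

theorem nuclearNorm_vecMulVec_le (u : EuclideanSpace ℝ (Fin m)) (x : EuclideanSpace ℝ (Fin n)) :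
    nuclearNorm (vecMulVec u x) ≤ ‖u‖ * ‖x‖ := by
  rw [nuclearNorm_eq_opNorm_traceForm]
  refine ContinuousLinearMap.opNorm_le_of_apply_le _ (by positivity) fun Z => ?_
  calc matInner (vecMulVec u x) Z = u ⬝ᵥ (Z *ᵥ x) := matInner_vecMulVec u x Z
    _ ≤ ‖u‖ * ‖Z‖ * ‖x‖ := dotProduct_mulVec_le Z u x
    _ = ‖u‖ * ‖x‖ * ‖Z‖ := by ring

theorem l2_opNorm_le_of_matInner_le_nuclearNorm {Z : Matrix (Fin m) (Fin n) ℝ} {c : ℝ}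
    (hc : 0 ≤ c) (h : ∀ W, matInner W Z ≤ c * nuclearNorm W) : ‖Z‖ ≤ c := by
  refine l2_opNorm_le_of_mulVec hc fun x => ?_
  set w := (EuclideanSpace.equiv (Fin m) ℝ).symm (Z *ᵥ x)
  have hw : ‖w‖ ^ 2 ≤ c * (‖w‖ * ‖x‖) := calc
    ‖w‖ ^ 2 = matInner (vecMulVec w x) Z := by
      rw [matInner_vecMulVec, EuclideanSpace.norm_sq_eq]
      simp [w, dotProduct, sq]
    _ ≤ c * nuclearNorm (vecMulVec w x) := h _
    _ ≤ c * (‖w‖ * ‖x‖) := by gcongr; exact nuclearNorm_vecMulVec_le w x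
  rcases (norm_nonneg w).eq_or_lt with hw₀ | hw₀
  · rw [← hw₀]; positivity
  · nlinarith

end NuclearNorm

section EntrywiseNorms

variable {m n : ℕ}

theorem matInner_self_pos {M : Matrix (Fin m) (Fin n) ℝ} (hM : M ≠ 0) : 0 < matInner M M := by
  have h := (posSemidef_conjTranspose_mul_self M).trace_nonneg
  have h' := mt trace_conjTranspose_mul_self_eq_zero_iff.mp hM
  rw [conjTranspose_eq_transpose_of_trivial] at h h'
  exact h.lt_of_ne' h'

theorem matInner_single (i : Fin m) (j : Fin n) (a : ℝ) (Z : Matrix (Fin m) (Fin n) ℝ) :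
    matInner (single i j a) Z = a * Z i j := by
  rw [matInner_eq_sum, Finset.sum_eq_single i, Finset.sum_eq_single j] <;>
    simp +contextual [single_apply, eq_comm]

theorem l1Norm_nonneg (Y : Matrix (Fin m) (Fin n) ℝ) : 0 ≤ l1Norm Y :=
  Finset.sum_nonneg fun _ _ => Finset.sum_nonneg fun _ _ => abs_nonneg _

theorem l1Norm_zero : l1Norm (0 : Matrix (Fin m) (Fin n) ℝ) = 0 := by
  simp [l1Norm]

theorem l1Norm_add_le (Y Y' : Matrix (Fin m) (Fin n) ℝ) :
    l1Norm (Y + Y') ≤ l1Norm Y + l1Norm Y' := by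
  simp only [l1Norm, ← Finset.sum_add_distrib]
  gcongr with i _ j _
  exact abs_add_le _ _

theorem l1Norm_smul (c : ℝ) (Y : Matrix (Fin m) (Fin n) ℝ) : l1Norm (c • Y) = |c| * l1Norm Y := by
  simp [l1Norm, abs_mul, Finset.mul_sum]

theorem l1Norm_neg (Y : Matrix (Fin m) (Fin n) ℝ) : l1Norm (-Y) = l1Norm Y := by
  simp [l1Norm]

theorem l1Norm_single (i : Fin m) (j : Fin n) (a : ℝ) : l1Norm (single i j a) = |a| := by
  rw [l1Norm, Finset.sum_eq_single i, Finset.sum_eq_single j] <;>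
    simp +contextual [single_apply, eq_comm]

theorem continuous_l1Norm : Continuous (l1Norm : Matrix (Fin m) (Fin n) ℝ → ℝ) := by
  unfold l1Norm
  fun_prop

theorem l2_opNorm_le_l1Norm (Y : Matrix (Fin m) (Fin n) ℝ) : ‖Y‖ ≤ l1Norm Y := by
  conv_lhs => rw [matrix_eq_sum_single Y]
  refine (norm_sum_le _ _).trans (Finset.sum_le_sum fun i _ => ?_)
  exact (norm_sum_le _ _).trans (Finset.sum_le_sum fun j _ => l2_opNorm_single_le i j _)

theorem abs_apply_le_maxNorm (Z : Matrix (Fin m) (Fin n) ℝ) (i : Fin m) (j : Fin n) :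
    |Z i j| ≤ maxNorm Z :=
  (le_ciSup (Set.finite_range _).bddAbove j).trans
    (le_ciSup (f := fun i => ⨆ j, |Z i j|) (Set.finite_range _).bddAbove i)

theorem maxNorm_smul_le {c : ℝ} (hc : 0 ≤ c) (Z : Matrix (Fin m) (Fin n) ℝ) :
    maxNorm (c • Z) ≤ c * maxNorm Z := by
  have h₀ : 0 ≤ c * maxNorm Z :=
    mul_nonneg hc (Real.iSup_nonneg fun i => Real.iSup_nonneg fun j => abs_nonneg _)
  refine Real.iSup_le (fun i => Real.iSup_le (fun j => ?_) h₀) h₀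
  rw [Matrix.smul_apply, smul_eq_mul, abs_mul, abs_of_nonneg hc]
  exact mul_le_mul_of_nonneg_left (abs_apply_le_maxNorm Z i j) hc

theorem matInner_le_l1Norm_mul_maxNorm (Y Z : Matrix (Fin m) (Fin n) ℝ) :
    matInner Y Z ≤ l1Norm Y * maxNorm Z := by
  rw [matInner_eq_sum, l1Norm, Finset.sum_mul]
  refine Finset.sum_le_sum fun i _ => ?_
  rw [Finset.sum_mul]
  refine Finset.sum_le_sum fun j _ => ?_
  calc Y i j * Z i j ≤ |Y i j| * |Z i j| := by rw [← abs_mul]; exact le_abs_self _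
    _ ≤ |Y i j| * maxNorm Z := by gcongr; exact abs_apply_le_maxNorm Z i j

theorem maxNorm_le_of_matInner_le_l1Norm {Z : Matrix (Fin m) (Fin n) ℝ} {c : ℝ} (hc : 0 ≤ c)
    (h : ∀ W, matInner W Z ≤ c * l1Norm W) : maxNorm Z ≤ c := by
  refine Real.iSup_le (fun i => Real.iSup_le (fun j => abs_le.mpr ⟨?_, ?_⟩) hc) hc
  · have := h (single i j (-1))
    rw [matInner_single, l1Norm_single] at this
    norm_num at this
    linarith
  · have := h (single i j 1)
    rw [matInner_single, l1Norm_single] at this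
    norm_num at this
    linarith

end EntrywiseNorms

theorem exists_linearMap_le_sublinear_eq {E : Type*} [AddCommGroup E] [Module ℝ E] (p : E → ℝ)
    (hp_smul : ∀ c : ℝ, 0 < c → ∀ x, p (c • x) = c * p x)
    (hp_add : ∀ x y, p (x + y) ≤ p x + p y) {x : E} (hx : x ≠ 0) :
    ∃ g : E →ₗ[ℝ] ℝ, (∀ y, g y ≤ p y) ∧ g x = p x := by
  have hp₀ : p 0 = 0 := by
    have := hp_smul 2 two_pos 0
    rw [smul_zero] at this
    linarith
  let f : E →ₗ.[ℝ] ℝ := LinearPMap.mkSpanSingleton x (p x) hx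
  have hf : ∀ y : f.domain, f y ≤ p y := by
    rintro ⟨y, hy⟩
    obtain ⟨c, rfl⟩ := Submodule.mem_span_singleton.mp hy
    rw [LinearPMap.mkSpanSingleton'_apply, smul_eq_mul]
    rcases lt_or_ge 0 c with hc | hc
    · exact (hp_smul c hc x).ge
    · rcases hc.lt_or_eq with hc | rfl
      · have h := hp_add (c • x) ((-c) • x)
        rw [← add_smul, add_neg_cancel, zero_smul, hp₀, hp_smul (-c) (neg_pos.mpr hc)] at h
        simp only [RingHom.id_apply]
        linarith
      · simp [hp₀]
  obtain ⟨g, hgf, hgp⟩ := exists_extension_of_le_sublinear f p hp_smul hp_add hf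
  exact ⟨g, hgp, (hgf ⟨x, Submodule.mem_span_singleton_self x⟩).trans
    (LinearPMap.mkSpanSingleton_apply ℝ ℝ hx (p x))⟩

section Gauge

variable {m n : ℕ} {γ : ℝ}

noncomputable def rpcaGauge (γ : ℝ) (W : Matrix (Fin m) (Fin n) ℝ) : ℝ :=
  sInf {t | ∃ X Y : Matrix (Fin m) (Fin n) ℝ, X + Y = W ∧ t = nuclearNorm X + γ * l1Norm Y}

theorem exists_rpca_minimizer (hγ : 0 < γ) (W : Matrix (Fin m) (Fin n) ℝ) :
    ∃ X Y, X + Y = W ∧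
      IsLeast {t | ∃ X Y : Matrix (Fin m) (Fin n) ℝ, X + Y = W ∧ t = nuclearNorm X + γ * l1Norm Y}
        (nuclearNorm X + γ * l1Norm Y) := by
  set f := fun X => nuclearNorm X + γ * l1Norm (W - X)
  have hf : Continuous f := continuous_nuclearNorm.add
    (continuous_const.mul (continuous_l1Norm.comp (continuous_const.sub continuous_id)))
  -- `f X ≥ γ ‖W - X‖₁ ≥ γ (‖X‖₁ - ‖W‖₁) ≥ γ (‖X‖ - ‖W‖₁)`
  have hcoercive : ∀ᶠ X in Filter.cocompact _, f 0 ≤ f X := by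
    filter_upwards [tendsto_norm_cocompact_atTop.eventually_ge_atTop (l1Norm W + f 0 / γ)]
      with X hX
    have h₁ : l1Norm X ≤ l1Norm W + l1Norm (W - X) := calc
      l1Norm X = l1Norm (W + -(W - X)) := by rw [neg_sub, add_sub_cancel]
      _ ≤ l1Norm W + l1Norm (W - X) := (l1Norm_add_le _ _).trans_eq (by rw [l1Norm_neg])
    have h₂ : γ * l1Norm (W - X) ≤ f X := le_add_of_nonneg_left (nuclearNorm_nonneg X)
    have h₃ := mul_le_mul_of_nonneg_left ((l2_opNorm_le_l1Norm X).trans' hX) hγ.le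
    rw [mul_add, mul_div_cancel₀ _ hγ.ne'] at h₃
    nlinarith
  obtain ⟨X, hX⟩ := hf.exists_forall_le' 0 hcoercive
  refine ⟨X, W - X, add_sub_cancel X W, ⟨X, W - X, add_sub_cancel X W, rfl⟩, ?_⟩
  rintro t ⟨X', Y', hXY', rfl⟩
  obtain rfl : Y' = W - X' := by rw [← hXY', add_sub_cancel_left]
  exact hX X'

theorem exists_rpcaGauge_eq (hγ : 0 < γ) (W : Matrix (Fin m) (Fin n) ℝ) :
    ∃ X Y, X + Y = W ∧ rpcaGauge γ W = nuclearNorm X + γ * l1Norm Y :=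
  let ⟨X, Y, hXY, hX⟩ := exists_rpca_minimizer hγ W
  ⟨X, Y, hXY, hX.csInf_eq⟩

theorem rpcaGauge_le (hγ : 0 < γ) {W X Y : Matrix (Fin m) (Fin n) ℝ} (h : X + Y = W) :
    rpcaGauge γ W ≤ nuclearNorm X + γ * l1Norm Y := by
  obtain ⟨_, _, _, hmin⟩ := exists_rpca_minimizer hγ W
  rw [rpcaGauge, hmin.csInf_eq]
  exact hmin.2 ⟨X, Y, h, rfl⟩

theorem rpcaGauge_le_nuclearNorm (hγ : 0 < γ) (W : Matrix (Fin m) (Fin n) ℝ) :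
    rpcaGauge γ W ≤ nuclearNorm W := by
  simpa [l1Norm_zero] using rpcaGauge_le hγ (add_zero W)

theorem rpcaGauge_le_l1Norm (hγ : 0 < γ) (W : Matrix (Fin m) (Fin n) ℝ) :
    rpcaGauge γ W ≤ γ * l1Norm W := by
  simpa [nuclearNorm_zero] using rpcaGauge_le hγ (zero_add W)

theorem rpcaGauge_add_le (hγ : 0 < γ) (W W' : Matrix (Fin m) (Fin n) ℝ) :
    rpcaGauge γ (W + W') ≤ rpcaGauge γ W + rpcaGauge γ W' := by
  obtain ⟨X, Y, rfl, hW⟩ := exists_rpcaGauge_eq hγ W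
  obtain ⟨X', Y', rfl, hW'⟩ := exists_rpcaGauge_eq hγ W'
  calc rpcaGauge γ (X + Y + (X' + Y'))
      ≤ nuclearNorm (X + X') + γ * l1Norm (Y + Y') := rpcaGauge_le hγ (add_add_add_comm _ _ _ _)
    _ ≤ nuclearNorm X + nuclearNorm X' + γ * (l1Norm Y + l1Norm Y') := by
      gcongr
      exacts [nuclearNorm_add_le X X', l1Norm_add_le Y Y']
    _ = rpcaGauge γ (X + Y) + rpcaGauge γ (X' + Y') := by rw [hW, hW']; ring

theorem rpcaGauge_smul_le (hγ : 0 < γ) {c : ℝ} (hc : 0 ≤ c) (W : Matrix (Fin m) (Fin n) ℝ) :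
    rpcaGauge γ (c • W) ≤ c * rpcaGauge γ W := by
  obtain ⟨X, Y, rfl, hW⟩ := exists_rpcaGauge_eq hγ W
  calc rpcaGauge γ (c • (X + Y)) ≤ nuclearNorm (c • X) + γ * l1Norm (c • Y) :=
        rpcaGauge_le hγ (smul_add c X Y).symm
    _ ≤ c * nuclearNorm X + γ * (c * l1Norm Y) := by
      grw [nuclearNorm_smul_le, l1Norm_smul, abs_of_nonneg hc]
    _ = c * rpcaGauge γ (X + Y) := by rw [hW]; ring

theorem rpcaGauge_smul (hγ : 0 < γ) {c : ℝ} (hc : 0 < c) (W : Matrix (Fin m) (Fin n) ℝ) :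
    rpcaGauge γ (c • W) = c * rpcaGauge γ W := by
  refine le_antisymm (rpcaGauge_smul_le hγ hc.le W) ?_
  have h := rpcaGauge_smul_le hγ (inv_nonneg.mpr hc.le) (c • W)
  rw [inv_smul_smul₀ hc.ne'] at h
  exact (le_inv_mul_iff₀ hc).mp h

theorem matInner_le_rpcaGauge_mul (hγ : 0 < γ) (W Z : Matrix (Fin m) (Fin n) ℝ) :
    matInner W Z ≤ rpcaGauge γ W * max ‖Z‖ (maxNorm Z / γ) := by
  obtain ⟨X, Y, rfl, hW⟩ := exists_rpcaGauge_eq hγ W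
  have hZ : maxNorm Z ≤ γ * max ‖Z‖ (maxNorm Z / γ) :=
    (mul_div_cancel₀ _ hγ.ne').symm.le.trans (by gcongr; exact le_max_right _ _)
  calc matInner (X + Y) Z = matInner X Z + matInner Y Z := LinearMap.map_add₂ traceForm X Y Z
    _ ≤ nuclearNorm X * ‖Z‖ + l1Norm Y * maxNorm Z :=
      add_le_add (matInner_le_nuclearNorm_mul X Z) (matInner_le_l1Norm_mul_maxNorm Y Z)
    _ ≤ nuclearNorm X * max ‖Z‖ (maxNorm Z / γ) + l1Norm Y * (γ * max ‖Z‖ (maxNorm Z / γ)) := by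
      gcongr
      · exact nuclearNorm_nonneg X
      · exact le_max_left _ _
      · exact l1Norm_nonneg Y
    _ = rpcaGauge γ (X + Y) * max ‖Z‖ (maxNorm Z / γ) := by rw [hW]; ring

theorem rpcaGauge_pos (hγ : 0 < γ) {M : Matrix (Fin m) (Fin n) ℝ} (hM : M ≠ 0) :
    0 < rpcaGauge γ M :=
  pos_of_mul_pos_left ((matInner_self_pos hM).trans_le (matInner_le_rpcaGauge_mul hγ M M))
    ((norm_nonneg M).trans (le_max_left _ _))

end Gauge

section Duality

variable {m n : ℕ} {γ : ℝ}

theorem exists_matInner_eq (g : Matrix (Fin m) (Fin n) ℝ →ₗ[ℝ] ℝ) :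
    ∃ Z, ∀ W, g W = matInner W Z := by
  refine ⟨of fun i j => g (single i j 1), fun W => ?_⟩
  conv_lhs => rw [matrix_eq_sum_single W]
  simp only [map_sum, matInner_eq_sum, of_apply]
  refine Finset.sum_congr rfl fun i _ => Finset.sum_congr rfl fun j _ => ?_
  have : single i j (W i j) = W i j • single i j 1 := by rw [smul_single, smul_eq_mul, mul_one]
  rw [this, map_smul, smul_eq_mul]

theorem exists_rpca_dual_certificate (hγ : 0 < γ) {M : Matrix (Fin m) (Fin n) ℝ} (hM : M ≠ 0) :
    ∃ Z, matInner M Z = rpcaGauge γ M ∧ max ‖Z‖ (maxNorm Z / γ) ≤ 1 := by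
  obtain ⟨g, hg, hgM⟩ := exists_linearMap_le_sublinear_eq (rpcaGauge γ)
    (fun c hc W => rpcaGauge_smul hγ hc W) (rpcaGauge_add_le hγ) hM
  obtain ⟨Z, hZ⟩ := exists_matInner_eq g
  refine ⟨Z, (hZ M).symm.trans hgM, max_le ?_ ?_⟩
  · refine l2_opNorm_le_of_matInner_le_nuclearNorm zero_le_one fun W => ?_
    rw [one_mul, ← hZ]
    exact (hg W).trans (rpcaGauge_le_nuclearNorm hγ W)
  · rw [div_le_one hγ]
    refine maxNorm_le_of_matInner_le_l1Norm hγ.le fun W => ?_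
    rw [← hZ]
    exact (hg W).trans (rpcaGauge_le_l1Norm hγ W)

theorem exists_rpca_dual_minimizer (hγ : 0 < γ) {M : Matrix (Fin m) (Fin n) ℝ} (hM : M ≠ 0) :
    ∃ Z, 1 ≤ matInner M Z ∧
      IsLeast {t | ∃ Z, 1 ≤ matInner M Z ∧ t = max ‖Z‖ (maxNorm Z / γ)}
        (max ‖Z‖ (maxNorm Z / γ)) ∧
      rpcaGauge γ M * max ‖Z‖ (maxNorm Z / γ) = 1 := by
  obtain ⟨Z₀, hZ₀M, hZ₀⟩ := exists_rpca_dual_certificate hγ hM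
  set ρ := rpcaGauge γ M
  have hρ : 0 < ρ := rpcaGauge_pos hγ hM
  have hlower : ∀ Z, 1 ≤ matInner M Z → ρ⁻¹ ≤ max ‖Z‖ (maxNorm Z / γ) := fun Z hZ => by
    rw [inv_le_iff_one_le_mul₀' hρ]
    exact hZ.trans (matInner_le_rpcaGauge_mul hγ M Z)
  set Z := ρ⁻¹ • Z₀
  have hZM : matInner M Z = 1 := by
    rw [← traceForm_apply, map_smul, traceForm_apply, hZ₀M, smul_eq_mul, inv_mul_cancel₀ hρ.ne']
  have hZ : max ‖Z‖ (maxNorm Z / γ) = ρ⁻¹ := by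
    refine le_antisymm ?_ (hlower Z hZM.ge)
    calc max ‖Z‖ (maxNorm Z / γ) ≤ ρ⁻¹ * max ‖Z₀‖ (maxNorm Z₀ / γ) := by
          rw [mul_max_of_nonneg _ _ (inv_nonneg.mpr hρ.le), mul_div_assoc']
          gcongr
          · exact (norm_smul_le _ _).trans_eq (by rw [Real.norm_of_nonneg (inv_nonneg.mpr hρ.le)])
          · exact maxNorm_smul_le (inv_nonneg.mpr hρ.le) Z₀
      _ ≤ ρ⁻¹ := mul_le_of_le_one_right (inv_nonneg.mpr hρ.le) hZ₀
  refine ⟨Z, hZM.ge, ⟨⟨Z, hZM.ge, rfl⟩, ?_⟩, by rw [hZ, mul_inv_cancel₀ hρ.ne']⟩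
  rintro t ⟨Z', hZ', rfl⟩
  rw [hZ]
  exact hlower Z' hZ'

end Duality

/-- Strong gauge duality for robust PCA: both the primal and the gauge dual attain their
optimal values, and the product of the two optimal values equals 1. -/
theorem rpca_strong_duality {m n : ℕ} (M : Matrix (Fin m) (Fin n) ℝ) (hM : M ≠ 0)
    (γ : ℝ) (hγ : 0 < γ) :
    (∃ X Y : Matrix (Fin m) (Fin n) ℝ, X + Y = M ∧
      ∀ X' Y' : Matrix (Fin m) (Fin n) ℝ, X' + Y' = M →
        nuclearNorm X + γ * l1Norm Y ≤ nuclearNorm X' + γ * l1Norm Y') ∧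
    (∃ Z : Matrix (Fin m) (Fin n) ℝ, 1 ≤ matInner M Z ∧
      ∀ Z' : Matrix (Fin m) (Fin n) ℝ, 1 ≤ matInner M Z' →
        max (matSpectralNorm Z) (maxNorm Z / γ) ≤ max (matSpectralNorm Z') (maxNorm Z' / γ)) ∧
    sInf {t : ℝ | ∃ X Y : Matrix (Fin m) (Fin n) ℝ, X + Y = M ∧
        t = nuclearNorm X + γ * l1Norm Y} *
      sInf {t : ℝ | ∃ Z : Matrix (Fin m) (Fin n) ℝ, 1 ≤ matInner M Z ∧
        t = max (matSpectralNorm Z) (maxNorm Z / γ)} = 1 := by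
  simp only [matSpectralNorm_eq_norm]
  obtain ⟨X, Y, hXY, hprimal⟩ := exists_rpca_minimizer hγ M
  obtain ⟨Z, hZM, hdual, hprod⟩ := exists_rpca_dual_minimizer hγ hM
  refine ⟨⟨X, Y, hXY, fun X' Y' h => hprimal.2 ⟨X', Y', h, rfl⟩⟩,
    ⟨Z, hZM, fun Z' h => hdual.2 ⟨Z', h, rfl⟩⟩, ?_⟩
  rw [hdual.csInf_eq]
  exact hprod
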